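/- arXiv:2303.03247 — 3 statements merged into one kernel-verified Lean document; each statement's English description precedes it below -/
import Mathlib

section
/- Let φ : ℝ≥0 × ℝⁿ → ℝⁿ satisfy the semigroup (flow) property φ(θ+ϑ, x) = φ(θ, φ(ϑ, x)) for all θ, ϑ ≥ 0 and x ∈ ℝⁿ. Let S, S_b ⊆ ℝⁿ with S_b ⊆ S, suppose x ∈ S_b implies φ(θ, x) ∈ S_b for all θ ≥ 0, and fix T ≥ 0. Define S_I = {x : φ(θ, x) ∈ S for all θ ∈ [0,T], and φ(T, x) ∈ S_b}. Then S_I is invariant under the flow: x ∈ S_I implies φ(ϑ, x) ∈ S_I for all ϑ ≥ 0. -/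
/-! A trajectory starting in `SI` stays in `S` for all time and lies in `Sb` from time `T` on,
since `Sb ⊆ S` is forward invariant. Both properties survive shifting the starting point along
the trajectory, by the semigroup property. -/

section Semiflow

variable {α : Type*} {φ : ℝ → α → α} {S Sb : Set α} {T : ℝ} {x : α}

theorem flow_mem_of_flow_mem_invariant
    (hsg : ∀ θ ϑ : ℝ, 0 ≤ θ → 0 ≤ ϑ → ∀ x, φ (θ + ϑ) x = φ θ (φ ϑ x))
    (hinv : ∀ x ∈ Sb, ∀ θ : ℝ, 0 ≤ θ → φ θ x ∈ Sb)
    {t : ℝ} (hT : 0 ≤ T) (hTt : T ≤ t)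
    (hx : φ T x ∈ Sb) : φ t x ∈ Sb := by
  have hshift : 0 ≤ t - T := sub_nonneg.2 hTt
  rw [show t = (t - T) + T by ring, hsg _ _ hshift hT]
  exact hinv _ hx _ hshift

theorem flow_mem_of_forall_Icc_of_flow_mem_invariant
    (hsg : ∀ θ ϑ : ℝ, 0 ≤ θ → 0 ≤ ϑ → ∀ x, φ (θ + ϑ) x = φ θ (φ ϑ x))
    (hinv : ∀ x ∈ Sb, ∀ θ : ℝ, 0 ≤ θ → φ θ x ∈ Sb)
    (hsub : Sb ⊆ S) (hT : 0 ≤ T)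
    (hS : ∀ θ ∈ Set.Icc 0 T, φ θ x ∈ S) (hSb : φ T x ∈ Sb) {t : ℝ} (ht : 0 ≤ t) :
    φ t x ∈ S := by
  rcases le_total t T with htT | hTt
  · exact hS t ⟨ht, htT⟩
  · exact hsub (flow_mem_of_flow_mem_invariant hsg hinv hT hTt hSb)

end Semiflow

theorem stmt_0 {n : ℕ} (φ : ℝ → (Fin n → ℝ) → (Fin n → ℝ))
    (hsg : ∀ θ ϑ : ℝ, 0 ≤ θ → 0 ≤ ϑ → ∀ x, φ (θ + ϑ) x = φ θ (φ ϑ x))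
    (S Sb : Set (Fin n → ℝ)) (hsub : Sb ⊆ S)
    (hinv : ∀ x ∈ Sb, ∀ θ : ℝ, 0 ≤ θ → φ θ x ∈ Sb)
    (T : ℝ) (hT : 0 ≤ T)
    (SI : Set (Fin n → ℝ))
    (hSI : SI = {x | (∀ θ ∈ Set.Icc (0:ℝ) T, φ θ x ∈ S) ∧ φ T x ∈ Sb}) :
    ∀ x ∈ SI, ∀ ϑ : ℝ, 0 ≤ ϑ → φ ϑ x ∈ SI := by
  subst hSI
  rintro x ⟨hS, hSb⟩ ϑ hϑ
  refine ⟨fun θ hθ => ?_, ?_⟩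
  · rw [← hsg θ ϑ hθ.1 hϑ]
    exact flow_mem_of_forall_Icc_of_flow_mem_invariant hsg hinv hsub hT hS hSb
      (add_nonneg hθ.1 hϑ)
  · rw [← hsg T ϑ hT hϑ]
    exact flow_mem_of_flow_mem_invariant hsg hinv hT (le_add_of_nonneg_right hϑ) hSb
end

section
/- Let h : ℝ≥0 → ℝ be differentiable and let A ≥ 0, λ > γ > 0. Suppose h'(t) ≥ −γ h(t) − A e^{−λt} for all t ≥ 0 and h(0) ≥ A/(λ − γ). Then h(t) ≥ 0 for all t ≥ 0. -/
/-!
Set `c = A / (λ - γ) ≥ 0` and `H t = h t - c e^{-λt}`. Since `λ c - A = γ c`, the hypothesis on `h'`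
becomes `H' ≥ -γ H`, so `e^{γt} H t` is nondecreasing and `H` stays nonnegative from `H 0 ≥ 0`.
Hence `h t = H t + c e^{-λt} ≥ 0`.
-/

open Real Set

section Comparison

variable {f : ℝ → ℝ} {γ : ℝ}

theorem monotoneOn_exp_mul_of_neg_mul_le_deriv (hf : Differentiable ℝ f)
    (hf' : ∀ t, 0 < t → -γ * f t ≤ deriv f t) :
    MonotoneOn (fun t => exp (γ * t) * f t) (Ici 0) := by
  have hderiv : ∀ t, HasDerivAt (fun t => exp (γ * t) * f t)
      (γ * exp (γ * t) * f t + exp (γ * t) * deriv f t) t := fun t => by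
    have hexp : HasDerivAt (fun t => exp (γ * t)) (exp (γ * t) * γ) t := by
      simpa using ((hasDerivAt_id t).const_mul γ).exp
    exact (hexp.mul (hf t).hasDerivAt).congr_deriv (by ring)
  have hdiff : Differentiable ℝ (fun t => exp (γ * t) * f t) :=
    fun t => (hderiv t).differentiableAt
  refine monotoneOn_of_deriv_nonneg (convex_Ici 0) hdiff.continuous.continuousOn
    hdiff.differentiableOn fun t ht => ?_
  rw [interior_Ici, mem_Ioi] at ht
  rw [(hderiv t).deriv]
  have := mul_le_mul_of_nonneg_left (hf' t ht) (exp_pos (γ * t)).le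
  linarith

theorem nonneg_of_neg_mul_le_deriv (hf : Differentiable ℝ f)
    (hf' : ∀ t, 0 < t → -γ * f t ≤ deriv f t) (h0 : 0 ≤ f 0) {t : ℝ} (ht : 0 ≤ t) :
    0 ≤ f t := by
  have hmono := monotoneOn_exp_mul_of_neg_mul_le_deriv hf hf' self_mem_Ici ht ht
  simp only [mul_zero, exp_zero, one_mul] at hmono
  exact (mul_nonneg_iff_of_pos_left (exp_pos (γ * t))).mp (h0.trans hmono)

end Comparison

theorem hasDerivAt_sub_const_mul_exp_neg_mul {h : ℝ → ℝ} {h' : ℝ} {t : ℝ}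
    (hh : HasDerivAt h h' t) (c lam : ℝ) :
    HasDerivAt (fun t => h t - c * exp (-lam * t)) (h' + lam * c * exp (-lam * t)) t := by
  have hexp : HasDerivAt (fun t => exp (-lam * t)) (exp (-lam * t) * -lam) t := by
    simpa using ((hasDerivAt_id t).const_mul (-lam)).exp
  exact (hh.sub (hexp.const_mul c)).congr_deriv (by ring)

theorem stmt_7_general (h : ℝ → ℝ) (A γ lam : ℝ) (hA : 0 ≤ A) (hγlam : γ < lam)
    (hdiff : Differentiable ℝ h)
    (hineq : ∀ t : ℝ, 0 ≤ t → deriv h t ≥ -γ * h t - A * Real.exp (-lam * t))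
    (h0 : h 0 ≥ A / (lam - γ)) :
    ∀ t : ℝ, 0 ≤ t → h t ≥ 0 := by
  intro t ht
  set c := A / (lam - γ)
  have hc : 0 ≤ c := div_nonneg hA (sub_pos.mpr hγlam).le
  have hlamc : lam * c - A = γ * c := by
    linear_combination div_mul_cancel₀ A (sub_pos.mpr hγlam).ne'
  have hH : ∀ s, HasDerivAt (fun s => h s - c * exp (-lam * s))
      (deriv h s + lam * c * exp (-lam * s)) s :=
    fun s => hasDerivAt_sub_const_mul_exp_neg_mul (hdiff s).hasDerivAt c lam
  have hHt : 0 ≤ h t - c * exp (-lam * t) := by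
    refine nonneg_of_neg_mul_le_deriv (γ := γ) (fun s => (hH s).differentiableAt)
      (fun s hs => ?_) (by simpa using h0) ht
    rw [(hH s).deriv]
    have := hineq s hs.le
    linear_combination this - hlamc * exp (-lam * s)
  linarith [mul_nonneg hc (exp_pos (-lam * t)).le]

theorem stmt_7 (h : ℝ → ℝ) (A γ lam : ℝ) (hA : 0 ≤ A) (hγ : 0 < γ) (hγlam : γ < lam)
    (hdiff : Differentiable ℝ h)
    (hineq : ∀ t : ℝ, 0 ≤ t → deriv h t ≥ -γ * h t - A * Real.exp (-lam * t))
    (h0 : h 0 ≥ A / (lam - γ)) :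
    ∀ t : ℝ, 0 ≤ t → h t ≥ 0 :=
  stmt_7_general h A γ lam hA hγlam hdiff hineq h0
end

section
/- Let h : ℝ≥0 → ℝ be differentiable and let γ, σ > 0, A, B ≥ 0, λ > γ. Suppose that for all t ≥ 0, h'(t) ≥ −γ h(t) − (A e^{−λt} + B)/(4σ), and that h(0) ≥ A/(4σ(λ − γ)) − B/(4σγ). Then h(t) ≥ −B/(4σγ) for all t ≥ 0. -/
/-!
Shifting the barrier to `H t = h t - A e^{-λt} / (4σ(λ - γ)) + B / (4σγ)` absorbs the
disturbance term exactly, leaving the homogeneous inequality `H' ≥ -γ H` with `H 0 ≥ 0`.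
Then `e^{γt} H t` is nondecreasing, so `H` stays nonnegative, and dropping the nonnegative
exponential term gives `h t ≥ -B / (4σγ)`.
-/

open Real Set

theorem nonneg_of_neg_mul_le_deriv_s14 {H : ℝ → ℝ} {γ : ℝ} (hcont : ContinuousOn H (Ici 0))
    (hdiff : DifferentiableOn ℝ H (Ioi 0)) (hderiv : ∀ t, 0 < t → -γ * H t ≤ deriv H t)
    (h0 : 0 ≤ H 0) {t : ℝ} (ht : 0 ≤ t) : 0 ≤ H t := by
  set G : ℝ → ℝ := fun s => exp (γ * s) * H s
  have hexp : ∀ s, HasDerivAt (fun s => exp (γ * s)) (exp (γ * s) * γ) s := fun s => by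
    simpa using ((hasDerivAt_id s).const_mul γ).exp
  have hG_deriv : ∀ s, 0 < s →
      HasDerivAt G (exp (γ * s) * γ * H s + exp (γ * s) * deriv H s) s := fun s hs =>
    (hexp s).mul ((hdiff s hs).differentiableAt (Ioi_mem_nhds hs)).hasDerivAt
  have hG_mono : MonotoneOn G (Ici 0) := by
    refine monotoneOn_of_deriv_nonneg (convex_Ici 0)
      (((continuous_const.mul continuous_id).rexp.continuousOn).mul hcont) ?_ ?_
    · rw [interior_Ici]
      exact fun s hs => (hG_deriv s hs).differentiableAt.differentiableWithinAt
    · rw [interior_Ici]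
      intro s hs
      rw [(hG_deriv s hs).deriv, mul_assoc, ← mul_add]
      exact mul_nonneg (exp_pos _).le (by linarith [hderiv s hs])
  have hG0 : G 0 = H 0 := by simp [G]
  have hGt : 0 ≤ G t := (hG0 ▸ h0).trans (hG_mono self_mem_Ici ht ht)
  exact nonneg_of_mul_nonneg_right hGt (exp_pos _)

theorem stmt_14_general (h : ℝ → ℝ) (γ σ A B lam : ℝ) (hγ : 0 < γ) (hσ : 0 < σ)
    (hA : 0 ≤ A) (hγlam : γ < lam) (hdiff : Differentiable ℝ h)
    (hineq : ∀ t : ℝ, 0 ≤ t →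
      deriv h t ≥ -γ * h t - (A * Real.exp (-lam * t) + B) / (4 * σ))
    (h0 : h 0 ≥ A / (4 * σ * (lam - γ)) - B / (4 * σ * γ)) :
    ∀ t : ℝ, 0 ≤ t → h t ≥ -B / (4 * σ * γ) := by
  set a := A / (4 * σ * (lam - γ))
  set b := B / (4 * σ * γ)
  have hlam : 0 < lam - γ := sub_pos.mpr hγlam
  have hdecay : ∀ t, HasDerivAt (fun t => exp (-lam * t)) (exp (-lam * t) * -lam) t := fun t => by
    simpa using ((hasDerivAt_id t).const_mul (-lam)).exp
  set H : ℝ → ℝ := fun t => h t - a * exp (-lam * t) + b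
  have hH_deriv : ∀ t, HasDerivAt H (deriv h t - a * (exp (-lam * t) * -lam)) t := fun t =>
    (((hdiff t).hasDerivAt.sub ((hdecay t).const_mul a)).add_const b)
  have hH_diff : Differentiable ℝ H := fun t => (hH_deriv t).differentiableAt
  have hH_ineq : ∀ t, 0 < t → -γ * H t ≤ deriv H t := by
    intro t ht
    have hdisturbance : (A * exp (-lam * t) + B) / (4 * σ)
        = (lam - γ) * a * exp (-lam * t) + γ * b := by
      simp only [a, b]; field_simp
    rw [(hH_deriv t).deriv]
    linarith [hineq t ht.le]
  intro t ht
  have hHt := nonneg_of_neg_mul_le_deriv_s14 hH_diff.continuous.continuousOn hH_diff.differentiableOn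
    hH_ineq (by simp only [H, mul_zero, exp_zero, mul_one]; linarith) ht
  have ha : 0 ≤ a * exp (-lam * t) := by positivity
  rw [neg_div]
  linarith [hHt]

theorem stmt_14 (h : ℝ → ℝ) (γ σ A B lam : ℝ) (hγ : 0 < γ) (hσ : 0 < σ)
    (hA : 0 ≤ A) (hB : 0 ≤ B) (hγlam : γ < lam) (hdiff : Differentiable ℝ h)
    (hineq : ∀ t : ℝ, 0 ≤ t →
      deriv h t ≥ -γ * h t - (A * Real.exp (-lam * t) + B) / (4 * σ))
    (h0 : h 0 ≥ A / (4 * σ * (lam - γ)) - B / (4 * σ * γ)) :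
    ∀ t : ℝ, 0 ≤ t → h t ≥ -B / (4 * σ * γ) :=
  stmt_14_general h γ σ A B lam hγ hσ hA hγlam hdiff hineq h0
end
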